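/- arXiv:1505.05068 — 2 statements merged into one kernel-verified Lean document; each statement's English description precedes it below -/
import Mathlib

section
/- Let X₁, …, Xₙ be independent sub-uniform random variables and let X̄ₙ = n⁻¹ Σᵢ Xᵢ. Then for every t with 0 < t ≤ 1/2, P(1/2 − X̄ₙ ≥ t) ≤ exp(−12 n t²) · {sinh(6t)/(6t)}ⁿ. -/
open MeasureTheory Set

/-- A real-valued random variable `X` on a probability space `(Ω, P)` is *sub-uniform*
if it is dominated in the convex order by the uniform distribution `U` on `[0,1]`:
`E[h(X)] ≤ E[h(U)]` for every convex `h : ℝ → ℝ` for which both expectations exist.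
(The expectation `E[h(X)]` exists, with a value in `(-∞, ∞]`, precisely when the
negative part of `h ∘ X` is integrable; in that case the inequality
`E[h(X)] ≤ E[h(U)] < ∞` forces `h ∘ X` to be integrable.  The expectation `E[h(U)]`
always exists, since a convex function on `ℝ` is continuous, hence bounded on `[0,1]`.) -/
def SubUniform {Ω : Type*} [MeasurableSpace Ω] (P : Measure Ω) (X : Ω → ℝ) : Prop :=
  ∀ h : ℝ → ℝ, ConvexOn ℝ Set.univ h →
    Integrable (fun ω => max (-(h (X ω))) 0) P →
    Integrable (fun ω => h (X ω)) P ∧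
      ∫ ω, h (X ω) ∂P ≤ ∫ x in Set.Icc (0:ℝ) 1, h x ∂volume

/-! Chernoff's method with tilt `λ = 12 t`: the map `x ↦ exp (λ (1/2 - x))` is convex and
nonnegative, so sub-uniformity bounds the moment generating function of each `1/2 - Xᵢ` at `λ`
by that of a centred uniform variable, `sinh (λ/2) / (λ/2)`. Independence multiplies these bounds,
and Markov's inequality at level `n t` contributes the factor `exp (-λ n t) = exp (-12 n t²)`. -/

open ProbabilityTheory Real

theorem convexOn_exp_mul_half_sub (c : ℝ) :
    ConvexOn ℝ univ (fun x => exp (c * (1 / 2 - x))) := by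
  have h_affine : (fun x : ℝ => exp (c * (1 / 2 - x))) =
      exp ∘ AffineMap.lineMap (k := ℝ) (c / 2) (c / 2 - c) := by
    ext x; simp [AffineMap.lineMap_apply]; ring_nf
  rw [h_affine]
  simpa using convexOn_exp.comp_affineMap (AffineMap.lineMap (c / 2) (c / 2 - c) : ℝ →ᵃ[ℝ] ℝ)

theorem integral_Icc_exp_mul_half_sub {c : ℝ} (hc : c ≠ 0) :
    ∫ x in Icc (0 : ℝ) 1, exp (c * (1 / 2 - x)) = sinh (c / 2) / (c / 2) := by
  rw [integral_Icc_eq_integral_Ioc, ← intervalIntegral.integral_of_le zero_le_one]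
  simp_rw [mul_sub]
  rw [intervalIntegral.integral_comp_sub_mul _ hc, integral_exp, sinh_eq, smul_eq_mul]
  field_simp
  ring_nf

namespace SubUniform

variable {Ω : Type*} [MeasurableSpace Ω] {P : Measure Ω} {X : Ω → ℝ} {h : ℝ → ℝ}

theorem integrable_comp_of_nonneg (hX : SubUniform P X) (hconv : ConvexOn ℝ univ h)
    (h_nonneg : ∀ x, 0 ≤ h x) : Integrable (fun ω => h (X ω)) P :=
  (hX h hconv (by simp [h_nonneg])).1

theorem integral_comp_le_of_nonneg (hX : SubUniform P X) (hconv : ConvexOn ℝ univ h)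
    (h_nonneg : ∀ x, 0 ≤ h x) : ∫ ω, h (X ω) ∂P ≤ ∫ x in Icc (0 : ℝ) 1, h x :=
  (hX h hconv (by simp [h_nonneg])).2

theorem integrable_exp_mul_half_sub (hX : SubUniform P X) (c : ℝ) :
    Integrable (fun ω => exp (c * (1 / 2 - X ω))) P :=
  hX.integrable_comp_of_nonneg (convexOn_exp_mul_half_sub c) fun _ => (exp_pos _).le

theorem mgf_half_sub_le (hX : SubUniform P X) {c : ℝ} (hc : c ≠ 0) :
    mgf (fun ω => 1 / 2 - X ω) P c ≤ sinh (c / 2) / (c / 2) :=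
  integral_Icc_exp_mul_half_sub hc ▸
    hX.integral_comp_le_of_nonneg (convexOn_exp_mul_half_sub c) fun _ => (exp_pos _).le

end SubUniform

theorem measureReal_sum_half_sub_ge_le {Ω ι : Type*} [MeasurableSpace Ω] [Fintype ι]
    {P : Measure Ω} [IsProbabilityMeasure P] {X : ι → Ω → ℝ} (hmeas : ∀ i, Measurable (X i))
    (hind : iIndepFun X P) (hsub : ∀ i, SubUniform P (X i)) {c : ℝ} (hc : 0 < c) (ε : ℝ) :
    P.real {ω | ε ≤ ∑ i, (1 / 2 - X i ω)} ≤
      exp (-c * ε) * (sinh (c / 2) / (c / 2)) ^ Fintype.card ι := by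
  set Y : ι → Ω → ℝ := fun i ω => 1 / 2 - X i ω
  have hYmeas : ∀ i, Measurable (Y i) := fun i => measurable_const.sub (hmeas i)
  have hYind : iIndepFun Y P := hind.comp _ fun _ => measurable_const.sub measurable_id
  have hsum : ∀ ω, ∑ i, (1 / 2 - X i ω) = (∑ i, Y i) ω := fun ω => (Finset.sum_apply ω _ Y).symm
  simp_rw [hsum]
  calc P.real {ω | ε ≤ (∑ i, Y i) ω}
      ≤ exp (-c * ε) * mgf (∑ i, Y i) P c :=
        measure_ge_le_exp_mul_mgf ε hc.le
          (hYind.integrable_exp_mul_sum hYmeas fun i _ => (hsub i).integrable_exp_mul_half_sub c)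
    _ = exp (-c * ε) * ∏ i, mgf (Y i) P c := by rw [hYind.mgf_sum hYmeas]
    _ ≤ exp (-c * ε) * ∏ _i : ι, sinh (c / 2) / (c / 2) := by
        gcongr with i
        · exact fun i _ => mgf_nonneg
        · exact (hsub i).mgf_half_sub_le hc.ne'
    _ = exp (-c * ε) * (sinh (c / 2) / (c / 2)) ^ Fintype.card ι := by
        rw [Finset.prod_const, Finset.card_univ]

open ProbabilityTheory in
theorem subUniform_avg_chernoff'_general {Ω : Type*} [MeasurableSpace Ω] (P : Measure Ω)
    [IsProbabilityMeasure P] (n : ℕ) (X : Fin n → Ω → ℝ)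
    (hmeas : ∀ i, Measurable (X i))
    (hind : iIndepFun X P)
    (hsub : ∀ i, SubUniform P (X i))
    (t : ℝ) (ht0 : 0 < t) :
    P {ω | 1/2 - (∑ i, X i ω) / n ≥ t} ≤
      ENNReal.ofReal (Real.exp (-12 * n * t ^ 2) * (Real.sinh (6 * t) / (6 * t)) ^ n) := by
  have hevent : {ω | 1/2 - (∑ i, X i ω) / n ≥ t} ⊆ {ω | n * t ≤ ∑ i, (1 / 2 - X i ω)} := by
    intro ω hω
    simp only [mem_ofPred_eq, Finset.sum_sub_distrib, Finset.sum_const, Finset.card_univ,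
      Fintype.card_fin, nsmul_eq_mul] at hω ⊢
    rcases n.eq_zero_or_pos with rfl | hn
    · simp
    · have := mul_le_mul_of_nonneg_left hω (n.cast_nonneg : (0 : ℝ) ≤ n)
      rwa [mul_sub, mul_div_cancel₀ _ (by positivity : (n : ℝ) ≠ 0)] at this
  have hchernoff :=
    measureReal_sum_half_sub_ge_le hmeas hind hsub (by positivity : 0 < 12 * t) (n * t)
  rw [Fintype.card_fin, show -(12 * t) * (n * t) = -12 * n * t ^ 2 by ring,
    show 12 * t / 2 = 6 * t by ring] at hchernoff
  rw [← ofReal_measureReal]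
  exact ENNReal.ofReal_le_ofReal ((measureReal_mono hevent).trans hchernoff)

open ProbabilityTheory in
/-- Let `X₁, …, Xₙ` be independent sub-uniform random variables and let
`X̄ₙ = n⁻¹ ∑ᵢ Xᵢ`.  Then for every `0 < t ≤ 1/2`,
`P(1/2 − X̄ₙ ≥ t) ≤ exp(−12 n t²) · {sinh(6t)/(6t)}ⁿ`. -/
theorem subUniform_avg_chernoff' {Ω : Type*} [MeasurableSpace Ω] (P : Measure Ω)
    [IsProbabilityMeasure P] (n : ℕ) (hn : 0 < n) (X : Fin n → Ω → ℝ)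
    (hmeas : ∀ i, Measurable (X i))
    (hind : iIndepFun X P)
    (hsub : ∀ i, SubUniform P (X i))
    (t : ℝ) (ht0 : 0 < t) (ht1 : t ≤ 1/2) :
    P {ω | 1/2 - (∑ i, X i ω) / n ≥ t} ≤
      ENNReal.ofReal (Real.exp (-12 * n * t ^ 2) * (Real.sinh (6 * t) / (6 * t)) ^ n) :=
  subUniform_avg_chernoff'_general P n X hmeas hind hsub t ht0
end

section
/- Let X₁, …, Xₙ be independent sub-uniform random variables (so that each Xᵢ ∈ (0,1] almost surely) and let Fₙ = −2 Σᵢ log(Xᵢ). Then for every t ≥ 2n, P(Fₙ ≥ t) ≤ exp{ n − t/2 − n·log(2n/t) }. -/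
/-!
Chernoff's method. For `0 ≤ a < 1` and `ε > 0`, extending `x ↦ x ^ (-a)` from `[ε, ∞)` to `ℝ`
by its tangent line at `ε` gives a nonnegative convex function lying below `x ^ (-a)` on `(0, 1]`,
so sub-uniformity bounds its expectation at `X` by `∫₀¹ x ^ (-a) dx = (1 - a)⁻¹`. Since the
extension is at least `ε ^ (-a)` on `(-∞, ε]`, Markov's inequality gives `P(X ≤ ε) ≤ 2 √ε`
(take `a = 1/2`), so `X > 0` almost surely; Fatou's lemma as `ε → 0` then gives
`E[exp (a · (-log X))] = E[X ^ (-a)] ≤ (1 - a)⁻¹`, the moment generating function of a standard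
exponential variable. By independence `Fₙ / 2 = ∑ᵢ -log Xᵢ` has moment generating function at most
`(1 - a)⁻ⁿ`, and the Chernoff bound at `a = 1 - 2n/t` is the claimed estimate.
-/

open MeasureTheory Set

open ProbabilityTheory Real Filter Topology

noncomputable def tangentExtRpowNeg (a ε x : ℝ) : ℝ :=
  if ε ≤ x then x ^ (-a) else ε ^ (-a) - a * ε ^ (-a - 1) * (x - ε)

section TangentExt

variable {a ε : ℝ}

lemma hasDerivAt_tangentExtRpowNeg (hε : 0 < ε) (x : ℝ) :
    HasDerivAt (tangentExtRpowNeg a ε) (-a * max x ε ^ (-a - 1)) x := by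
  have hline : ∀ y, HasDerivAt (fun z => ε ^ (-a) - a * ε ^ (-a - 1) * (z - ε))
      (-a * ε ^ (-a - 1)) y := fun y => by
    simpa using (((hasDerivAt_id y).sub_const ε).const_mul (a * ε ^ (-a - 1))).const_sub _
  have hpow : ∀ y, 0 < y → HasDerivAt (fun z => z ^ (-a)) (-a * y ^ (-a - 1)) y := fun y hy => by
    simpa using hasDerivAt_rpow_const (p := -a) (Or.inl hy.ne')
  rcases lt_trichotomy x ε with hlt | rfl | hgt
  · rw [max_eq_right hlt.le]
    refine (hline x).congr_of_eventuallyEq ?_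
    filter_upwards [Iio_mem_nhds hlt] with y hy using if_neg (not_le.2 hy)
  · have hleft : HasDerivWithinAt (tangentExtRpowNeg a x) (-a * x ^ (-a - 1)) (Iic x) x :=
      (hline x).hasDerivWithinAt.congr (fun y hy => by
        rcases (mem_Iic.1 hy).lt_or_eq with hy | rfl
        · exact if_neg (not_le.2 hy)
        · simp [tangentExtRpowNeg]) (by simp [tangentExtRpowNeg])
    have hright : HasDerivWithinAt (tangentExtRpowNeg a x) (-a * x ^ (-a - 1)) (Ici x) x :=
      (hpow x hε).hasDerivWithinAt.congr (fun y hy => if_pos hy) (if_pos le_rfl)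
    rw [max_self, ← hasDerivWithinAt_univ, ← Iic_union_Ici]
    exact hleft.union hright
  · rw [max_eq_left hgt.le]
    refine (hpow x (hε.trans hgt)).congr_of_eventuallyEq ?_
    filter_upwards [Ioi_mem_nhds hgt] with y hy using if_pos hy.le

lemma convexOn_tangentExtRpowNeg (ha : 0 ≤ a) (hε : 0 < ε) :
    ConvexOn ℝ univ (tangentExtRpowNeg a ε) := by
  have hderiv : deriv (tangentExtRpowNeg a ε) = fun x => -a * max x ε ^ (-a - 1) :=
    funext fun x => (hasDerivAt_tangentExtRpowNeg hε x).deriv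
  refine Monotone.convexOn_univ_of_deriv
    (fun x => (hasDerivAt_tangentExtRpowNeg hε x).differentiableAt) ?_
  rw [hderiv]
  intro x y hxy
  have := rpow_le_rpow_of_nonpos (lt_max_of_lt_right hε) (max_le_max_right ε hxy)
    (by linarith : -a - 1 ≤ 0)
  simpa using mul_le_mul_of_nonneg_left this ha

lemma rpow_neg_le_tangentExtRpowNeg {x : ℝ} (ha : 0 ≤ a) (hε : 0 < ε) (hx : x ≤ ε) :
    ε ^ (-a) ≤ tangentExtRpowNeg a ε x := by
  unfold tangentExtRpowNeg
  split_ifs with h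
  · rw [le_antisymm hx h]
  · have := rpow_nonneg hε.le (-a - 1)
    nlinarith [mul_nonneg ha this]

lemma tangentExtRpowNeg_nonneg (ha : 0 ≤ a) (hε : 0 < ε) (x : ℝ) :
    0 ≤ tangentExtRpowNeg a ε x := by
  rcases le_total x ε with hx | hx
  · exact (rpow_nonneg hε.le _).trans (rpow_neg_le_tangentExtRpowNeg ha hε hx)
  · rw [tangentExtRpowNeg, if_pos hx]
    exact rpow_nonneg (hε.le.trans hx) _

lemma one_sub_mul_sub_one_le_rpow_neg {a r : ℝ} (ha : 0 ≤ a) (hr : 0 < r) :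
    1 - a * (r - 1) ≤ r ^ (-a) := by
  rw [rpow_def_of_pos hr]
  nlinarith [add_one_le_exp (log r * -a), log_le_sub_one_of_pos hr]

lemma tangentExtRpowNeg_le_rpow_neg {x : ℝ} (ha : 0 ≤ a) (hε : 0 < ε) (hx : 0 < x) :
    tangentExtRpowNeg a ε x ≤ x ^ (-a) := by
  unfold tangentExtRpowNeg
  split_ifs
  · exact le_rfl
  · have hsplit : x ^ (-a) = ε ^ (-a) * (x / ε) ^ (-a) := by
      rw [div_rpow hx.le hε.le, mul_div_cancel₀ _ (rpow_pos_of_pos hε _).ne']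
    have htangent : ε ^ (-a) - a * ε ^ (-a - 1) * (x - ε) = ε ^ (-a) * (1 - a * (x / ε - 1)) := by
      rw [rpow_sub_one hε.ne']
      field_simp
    rw [hsplit, htangent]
    exact mul_le_mul_of_nonneg_left (one_sub_mul_sub_one_le_rpow_neg ha (div_pos hx hε))
      (rpow_nonneg hε.le _)

lemma continuous_tangentExtRpowNeg (hε : 0 < ε) : Continuous (tangentExtRpowNeg a ε) :=
  continuous_iff_continuousAt.2 fun x => (hasDerivAt_tangentExtRpowNeg hε x).continuousAt

lemma measurable_tangentExtRpowNeg : Measurable (tangentExtRpowNeg a ε) :=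
  Measurable.ite measurableSet_Ici (by fun_prop) (by fun_prop)

lemma setIntegral_Icc_tangentExtRpowNeg_le (ha : 0 ≤ a) (ha1 : a < 1) (hε : 0 < ε) :
    ∫ x in Icc (0:ℝ) 1, tangentExtRpowNeg a ε x ≤ (1 - a)⁻¹ := by
  have hrpow : IntegrableOn (fun x : ℝ => x ^ (-a)) (Ioc 0 1) := by
    rw [← intervalIntegrable_iff_integrableOn_Ioc_of_le zero_le_one]
    exact intervalIntegral.intervalIntegrable_rpow' (by linarith)
  calc ∫ x in Icc (0:ℝ) 1, tangentExtRpowNeg a ε x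
      = ∫ x in Ioc (0:ℝ) 1, tangentExtRpowNeg a ε x := integral_Icc_eq_integral_Ioc
    _ ≤ ∫ x in Ioc (0:ℝ) 1, x ^ (-a) :=
      setIntegral_mono_on (continuous_tangentExtRpowNeg hε).integrableOn_Ioc hrpow
        measurableSet_Ioc fun x hx => tangentExtRpowNeg_le_rpow_neg ha hε hx.1
    _ = (1 - a)⁻¹ := by
      rw [← intervalIntegral.integral_of_le zero_le_one, integral_rpow (Or.inl (by linarith)),
        one_rpow, zero_rpow (by linarith), neg_add_eq_sub]
      simp

end TangentExt

namespace SubUniform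

variable {Ω : Type*} [MeasurableSpace Ω] {P : Measure Ω} {X : Ω → ℝ} {a ε : ℝ}

lemma integrable_and_integral_le_of_nonneg (hX : SubUniform P X) {h : ℝ → ℝ}
    (hconv : ConvexOn ℝ univ h) (hnonneg : ∀ x, 0 ≤ h x) :
    Integrable (fun ω => h (X ω)) P ∧ ∫ ω, h (X ω) ∂P ≤ ∫ x in Icc (0:ℝ) 1, h x :=
  hX h hconv <| by simp only [max_eq_right (neg_nonpos.2 (hnonneg _))]; exact integrable_zero _ _ _

lemma integrable_and_integral_tangentExtRpowNeg_le (hX : SubUniform P X) (ha : 0 ≤ a)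
    (ha1 : a < 1) (hε : 0 < ε) :
    Integrable (fun ω => tangentExtRpowNeg a ε (X ω)) P ∧
      ∫ ω, tangentExtRpowNeg a ε (X ω) ∂P ≤ (1 - a)⁻¹ := by
  obtain ⟨hint, hle⟩ := hX.integrable_and_integral_le_of_nonneg (convexOn_tangentExtRpowNeg ha hε)
    (tangentExtRpowNeg_nonneg ha hε)
  exact ⟨hint, hle.trans (setIntegral_Icc_tangentExtRpowNeg_le ha ha1 hε)⟩

lemma measureReal_le_le_rpow [IsFiniteMeasure P] (hX : SubUniform P X) (ha : 0 ≤ a)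
    (ha1 : a < 1) (hε : 0 < ε) :
    P.real {ω | X ω ≤ ε} ≤ ε ^ a * (1 - a)⁻¹ := by
  obtain ⟨hint, hle⟩ := hX.integrable_and_integral_tangentExtRpowNeg_le ha ha1 hε
  have hmarkov := mul_meas_ge_le_integral_of_nonneg
    (ae_of_all _ fun ω => tangentExtRpowNeg_nonneg ha hε (X ω)) hint (ε ^ (-a))
  have hsub : {ω | X ω ≤ ε} ⊆ {ω | ε ^ (-a) ≤ tangentExtRpowNeg a ε (X ω)} :=
    fun ω hω => rpow_neg_le_tangentExtRpowNeg ha hε hω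
  calc P.real {ω | X ω ≤ ε}
      ≤ ε ^ a * (ε ^ (-a) * P.real {ω | ε ^ (-a) ≤ tangentExtRpowNeg a ε (X ω)}) := by
        rw [← mul_assoc, ← rpow_add hε, add_neg_cancel, rpow_zero, one_mul]
        exact measureReal_mono hsub
    _ ≤ ε ^ a * (1 - a)⁻¹ := by gcongr; exact hmarkov.trans hle

lemma ae_pos [IsFiniteMeasure P] (hX : SubUniform P X) : ∀ᵐ ω ∂P, 0 < X ω := by
  have hlim : Tendsto (fun ε : ℝ => ε ^ (1 / 2 : ℝ) * (1 - 1 / 2)⁻¹) (𝓝[>] 0) (𝓝 0) := by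
    have := ((continuousAt_rpow_const 0 (1 / 2) (Or.inr (by norm_num))).tendsto.mul_const
      (1 - 1 / 2 : ℝ)⁻¹).mono_left (nhdsWithin_le_nhds (s := Ioi 0))
    simpa using this
  have hzero : P.real {ω | X ω ≤ 0} = 0 := by
    refine le_antisymm (ge_of_tendsto hlim ?_) measureReal_nonneg
    filter_upwards [self_mem_nhdsWithin] with ε (hε : 0 < ε)
    exact (measureReal_mono fun ω hω => le_trans hω hε.le).trans
      (hX.measureReal_le_le_rpow (by norm_num) (by norm_num) hε)
  rw [measureReal_eq_zero_iff] at hzero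
  simpa [ae_iff] using hzero

lemma lintegral_ofReal_rpow_neg_le [IsFiniteMeasure P] (hX : SubUniform P X) (hm : Measurable X)
    (ha : 0 ≤ a) (ha1 : a < 1) :
    ∫⁻ ω, ENNReal.ofReal (X ω ^ (-a)) ∂P ≤ ENNReal.ofReal (1 - a)⁻¹ := by
  have hliminf : ∀ᵐ ω ∂P, ENNReal.ofReal (X ω ^ (-a)) =
      liminf (fun ε => ENNReal.ofReal (tangentExtRpowNeg a ε (X ω))) (𝓝[>] 0) := by
    filter_upwards [hX.ae_pos] with ω hω
    refine (Tendsto.liminf_eq (tendsto_const_nhds.congr' ?_)).symm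
    filter_upwards [nhdsWithin_le_nhds (eventually_le_nhds hω)] with ε hε
    rw [tangentExtRpowNeg, if_pos hε]
  calc ∫⁻ ω, ENNReal.ofReal (X ω ^ (-a)) ∂P
      = ∫⁻ ω, liminf (fun ε => ENNReal.ofReal (tangentExtRpowNeg a ε (X ω))) (𝓝[>] 0) ∂P :=
        lintegral_congr_ae hliminf
    _ ≤ liminf (fun ε => ∫⁻ ω, ENNReal.ofReal (tangentExtRpowNeg a ε (X ω)) ∂P) (𝓝[>] 0) :=
        lintegral_liminf_le' fun _ =>
          (measurable_tangentExtRpowNeg.comp hm).ennreal_ofReal.aemeasurable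
    _ ≤ ENNReal.ofReal (1 - a)⁻¹ := by
        refine liminf_le_of_frequently_le' (Eventually.frequently ?_)
        filter_upwards [self_mem_nhdsWithin] with ε (hε : 0 < ε)
        obtain ⟨hint, hle⟩ := hX.integrable_and_integral_tangentExtRpowNeg_le ha ha1 hε
        rw [← ofReal_integral_eq_lintegral_ofReal hint
          (ae_of_all _ fun ω => tangentExtRpowNeg_nonneg ha hε _)]
        exact ENNReal.ofReal_le_ofReal hle

lemma lintegral_exp_mul_neg_log_le [IsFiniteMeasure P] (hX : SubUniform P X) (hm : Measurable X)
    (ha : 0 ≤ a) (ha1 : a < 1) :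
    ∫⁻ ω, ENNReal.ofReal (exp (a * -log (X ω))) ∂P ≤ ENNReal.ofReal (1 - a)⁻¹ := by
  refine le_of_eq_of_le (lintegral_congr_ae ?_) (hX.lintegral_ofReal_rpow_neg_le hm ha ha1)
  filter_upwards [hX.ae_pos] with ω hω
  rw [rpow_def_of_pos hω]
  congr 2
  ring

lemma integrable_exp_mul_neg_log [IsFiniteMeasure P] (hX : SubUniform P X) (hm : Measurable X)
    (ha : 0 ≤ a) (ha1 : a < 1) : Integrable (fun ω => exp (a * -log (X ω))) P :=
  ⟨(hm.log.neg.const_mul a).exp.aestronglyMeasurable,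
    (hasFiniteIntegral_iff_ofReal (ae_of_all _ fun _ => (exp_pos _).le)).2
      ((hX.lintegral_exp_mul_neg_log_le hm ha ha1).trans_lt ENNReal.ofReal_lt_top)⟩

lemma mgf_neg_log_le [IsFiniteMeasure P] (hX : SubUniform P X) (hm : Measurable X)
    (ha : 0 ≤ a) (ha1 : a < 1) : mgf (fun ω => -log (X ω)) P a ≤ (1 - a)⁻¹ := by
  rw [mgf, integral_eq_lintegral_of_nonneg_ae (ae_of_all _ fun _ => (exp_pos _).le)
    (hX.integrable_exp_mul_neg_log hm ha ha1).aestronglyMeasurable]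
  exact ENNReal.toReal_le_of_le_ofReal (inv_nonneg.2 (by linarith))
    (hX.lintegral_exp_mul_neg_log_le hm ha ha1)

end SubUniform

theorem measureReal_sum_ge_le_of_mgf_le {Ω ι : Type*} [MeasurableSpace Ω] {P : Measure Ω}
    [IsFiniteMeasure P] [Fintype ι] {Y : ι → Ω → ℝ} (hind : iIndepFun Y P)
    (hmeas : ∀ i, Measurable (Y i))
    (hint : ∀ i, ∀ a ∈ Ico (0:ℝ) 1, Integrable (fun ω => exp (a * Y i ω)) P)
    (hmgf : ∀ i, ∀ a ∈ Ico (0:ℝ) 1, mgf (Y i) P a ≤ (1 - a)⁻¹)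
    (hι : 0 < Fintype.card ι) {s : ℝ} (hs : Fintype.card ι ≤ s) :
    P.real {ω | s ≤ ∑ i, Y i ω} ≤
      exp (Fintype.card ι - s - Fintype.card ι * log (Fintype.card ι / s)) := by
  set n : ℝ := (Fintype.card ι : ℝ)
  have hn : 0 < n := Nat.cast_pos.2 hι
  have hs0 : 0 < s := hn.trans_le hs
  have ha : 1 - n / s ∈ Ico (0:ℝ) 1 :=
    ⟨sub_nonneg.2 ((div_le_one hs0).2 hs), sub_lt_self _ (div_pos hn hs0)⟩
  have hchernoff := measure_ge_le_exp_mul_mgf s ha.1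
    (hind.integrable_exp_mul_sum hmeas (s := Finset.univ) fun i _ => hint i _ ha)
  simp only [Finset.sum_apply, hind.mgf_sum hmeas] at hchernoff
  calc P.real {ω | s ≤ ∑ i, Y i ω}
      ≤ exp (-(1 - n / s) * s) * ∏ i, mgf (Y i) P (1 - n / s) := hchernoff
    _ ≤ exp (-(1 - n / s) * s) * ∏ _i : ι, (n / s)⁻¹ := by
        gcongr with i
        · exact fun i _ => mgf_nonneg
        · simpa only [sub_sub_cancel] using hmgf i _ ha
    _ = exp (n - s - n * log (n / s)) := by
        rw [Finset.prod_const, Finset.card_univ, ← exp_log (inv_pos.2 (div_pos hn hs0)),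
          ← exp_nat_mul, ← exp_add, log_inv]
        congr 1
        field_simp
        ring

open ProbabilityTheory in
/-- Let `X₁, …, Xₙ` be independent sub-uniform random variables (so that each
`Xᵢ ∈ (0,1]` almost surely) and let `Fₙ = −2 ∑ᵢ log(Xᵢ)` be Fisher's combination
statistic.  Then for every `t ≥ 2n`,
`P(Fₙ ≥ t) ≤ exp{n − t/2 − n log(2n/t)}`. -/
theorem subUniform_fisher_bound {Ω : Type*} [MeasurableSpace Ω] (P : Measure Ω)
    [IsProbabilityMeasure P] (n : ℕ) (hn : 0 < n) (X : Fin n → Ω → ℝ)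
    (hmeas : ∀ i, Measurable (X i))
    (hind : iIndepFun X P)
    (hsub : ∀ i, SubUniform P (X i))
    (t : ℝ) (ht : 2 * n ≤ t) :
    P {ω | -2 * ∑ i, Real.log (X i ω) ≥ t} ≤
      ENNReal.ofReal (Real.exp (n - t / 2 - n * Real.log (2 * n / t))) := by
  have hevent : {ω | -2 * ∑ i, Real.log (X i ω) ≥ t} = {ω | t / 2 ≤ ∑ i, -Real.log (X i ω)} := by
    ext ω
    simp only [mem_ofPred_eq, Finset.sum_neg_distrib]
    constructor <;> intro h <;> linarith
  have hbound := measureReal_sum_ge_le_of_mgf_le (P := P) (Y := fun i ω => -Real.log (X i ω))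
    (hind.comp (fun _ x => -Real.log x) fun _ => measurable_log.neg)
    (fun i => (hmeas i).log.neg)
    (fun i a ha => (hsub i).integrable_exp_mul_neg_log (hmeas i) ha.1 ha.2)
    (fun i a ha => (hsub i).mgf_neg_log_le (hmeas i) ha.1 ha.2)
    (by simpa using hn) (s := t / 2) (by simp only [Fintype.card_fin]; linarith)
  rw [Fintype.card_fin, div_div_eq_mul_div, mul_comm (n : ℝ) 2] at hbound
  rw [hevent, ← ofReal_measureReal]
  exact ENNReal.ofReal_le_ofReal hbound
end
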